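/- arXiv:2305.14168 — 6 statements merged into one kernel-verified Lean document; each statement's English description precedes it below -/
import Mathlib

section
/- Let (C0, C1) be an SXVCS for an access structure (Γ_Qual, Γ_Forb) with pixel expansion m, with static reconstruction vectors E0(Q), E1(Q), and enumerate Γ_Qual = {Q_1, …, Q_t} with qualified matrix G. Define B0, B1 : Matrix (Fin t) (Fin m) (ZMod 2) by letting row k of Bi be Ei(Q_k). Then the solution sets S0 := {X : G * X = B0} and S1 := {X : G * X = B1} are nonempty, contain (the supports of) C0 and C1 respectively, and form an SXVCS for (Γ_Qual, Γ_Forb) with the same static reconstruction vectors: for i = 0, 1 and every X ∈ Si and every k, ⊕X[Q_k] = Ei(Q_k), and for every F ∈ Γ_Forb, {X[F] : X ∈ S0} = {X[F] : X ∈ S1}. -/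
open scoped Classical

noncomputable section

/-- Hamming weight of a vector over `ZMod 2`. -/
def wt {m : ℕ} (v : Fin m → ZMod 2) : ℕ :=
  (Finset.univ.filter fun j => v j = 1).card

/-- `⊕M[Q]` : XOR (sum over `ZMod 2`) of the rows of `M` with index in `Q`. -/
def xorRows {n m : ℕ} (M : Matrix (Fin n) (Fin m) (ZMod 2)) (Q : Finset (Fin n)) :
    Fin m → ZMod 2 :=
  fun j => ∑ i ∈ Q, M i j

/-- `M[F]` : restriction of `M` to the rows with index in `F`. -/
def rowRestrict {n m : ℕ} (F : Finset (Fin n)) (M : Matrix (Fin n) (Fin m) (ZMod 2)) :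
    {x // x ∈ F} → Fin m → ZMod 2 :=
  fun i j => M i.1 j

/-- An access structure: a nonempty family of nonempty subsets of `Fin n`. -/
def IsAccessStructure {n : ℕ} (ΓQual : Finset (Finset (Fin n))) : Prop :=
  ΓQual.Nonempty ∧ ∀ Q ∈ ΓQual, Q.Nonempty

/-- `Γ⁻` : minimal elements of `ΓQual` under inclusion. -/
def minQual {n : ℕ} (ΓQual : Finset (Finset (Fin n))) : Finset (Finset (Fin n)) :=
  ΓQual.filter fun Q => ∀ Q' ∈ ΓQual, Q' ⊆ Q → Q' = Q

/-- `Γ_Forb` : sets containing no minimal qualified set. -/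
def Forb {n : ℕ} (ΓQual : Finset (Finset (Fin n))) (F : Finset (Fin n)) : Prop :=
  ∀ Q ∈ minQual ΓQual, ¬ Q ⊆ F

/-- XVCS: contrast + security (same matrices with same frequencies, after
normalizing by the cardinalities). -/
def XVCS {n m : ℕ} (ΓQual : Finset (Finset (Fin n)))
    (C0 C1 : Multiset (Matrix (Fin n) (Fin m) (ZMod 2))) : Prop :=
  C0 ≠ 0 ∧ C1 ≠ 0 ∧
  (∀ Q ∈ ΓQual, ∀ M0 ∈ C0, ∀ M1 ∈ C1, wt (xorRows M0 Q) < wt (xorRows M1 Q)) ∧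
  ∀ F : Finset (Fin n), Forb ΓQual F →
    ∀ D : {x // x ∈ F} → Fin m → ZMod 2,
      Multiset.card C1 * (C0.map (rowRestrict F)).count D
        = Multiset.card C0 * (C1.map (rowRestrict F)).count D

/-- Static contrast condition of an SXVCS. -/
def StaticContrast {n m : ℕ} (ΓQual : Finset (Finset (Fin n)))
    (C0 C1 : Multiset (Matrix (Fin n) (Fin m) (ZMod 2))) : Prop :=
  ∀ Q ∈ ΓQual, ∃ E0 E1 : Fin m → ZMod 2,
    (∀ M ∈ C0, xorRows M Q = E0) ∧ (∀ M ∈ C1, xorRows M Q = E1) ∧ wt E0 < wt E1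

/-- SXVCS : an XVCS satisfying the static contrast condition. -/
def SXVCS {n m : ℕ} (ΓQual : Finset (Finset (Fin n)))
    (C0 C1 : Multiset (Matrix (Fin n) (Fin m) (ZMod 2))) : Prop :=
  XVCS ΓQual C0 C1 ∧ StaticContrast ΓQual C0 C1

/-- Perfect white pixel reconstruction. -/
def PerfectWhite {n m : ℕ} (ΓQual : Finset (Finset (Fin n)))
    (C0 : Multiset (Matrix (Fin n) (Fin m) (ZMod 2))) : Prop :=
  ∀ Q ∈ ΓQual, ∀ M ∈ C0, xorRows M Q = 0

/-- Average contrast of a scheme. -/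
def avgContrast {n m : ℕ} (ΓQual : Finset (Finset (Fin n)))
    (C0 C1 : Multiset (Matrix (Fin n) (Fin m) (ZMod 2))) : ℚ :=
  (∑ Q ∈ ΓQual,
      ((C1.map fun M => (wt (xorRows M Q) : ℚ)).sum / (Multiset.card C1 : ℚ)
        - (C0.map fun M => (wt (xorRows M Q) : ℚ)).sum / (Multiset.card C0 : ℚ)) / (m : ℚ))
    / (ΓQual.card : ℚ)

/-- PXVCS : probabilistic contrast condition + security. -/
def PXVCS {n m : ℕ} (ΓQual : Finset (Finset (Fin n)))
    (C0 C1 : Multiset (Matrix (Fin n) (Fin m) (ZMod 2))) : Prop :=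
  C0 ≠ 0 ∧ C1 ≠ 0 ∧
  (∀ Q ∈ ΓQual,
    (C0.map fun M => (wt (xorRows M Q) : ℚ)).sum / (Multiset.card C0 : ℚ)
      < (C1.map fun M => (wt (xorRows M Q) : ℚ)).sum / (Multiset.card C1 : ℚ)) ∧
  ∀ F : Finset (Fin n), Forb ΓQual F →
    ∀ D : {x // x ∈ F} → Fin m → ZMod 2,
      Multiset.card C1 * (C0.map (rowRestrict F)).count D
        = Multiset.card C0 * (C1.map (rowRestrict F)).count D

/-- Qualified matrix of an enumeration `Q : Fin t → Finset (Fin n)` of `ΓQual`. -/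
def qualMatrix {t n : ℕ} (Q : Fin t → Finset (Fin n)) : Matrix (Fin t) (Fin n) (ZMod 2) :=
  fun k i => if i ∈ Q k then 1 else 0

/-- Solution set of `G * X = B` as a multiset (each solution once). -/
def solMS {t n m : ℕ} (G : Matrix (Fin t) (Fin n) (ZMod 2))
    (B : Matrix (Fin t) (Fin m) (ZMod 2)) : Multiset (Matrix (Fin n) (Fin m) (ZMod 2)) :=
  (Finset.univ.filter fun X : Matrix (Fin n) (Fin m) (ZMod 2) => G * X = B).val

/-- Symmetric difference of a family: points in an odd number of members. -/
def symmDiffFam {n : ℕ} (S : Finset (Finset (Fin n))) : Finset (Fin n) :=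
  Finset.univ.filter fun i => Odd (S.filter fun A => i ∈ A).card

/-- The `(k,n)` threshold qualified family. -/
def qualK (n k : ℕ) : Finset (Finset (Fin n)) :=
  Finset.univ.filter fun Q : Finset (Fin n) => Q.card = k

lemma mulQual {t n m : ℕ} (Q : Fin t → Finset (Fin n))
    (X : Matrix (Fin n) (Fin m) (ZMod 2)) (k : Fin t) :
    (qualMatrix Q * X) k = xorRows X (Q k) := by
  funext j
  simp [Matrix.mul_apply, qualMatrix, xorRows, ite_mul, Finset.sum_ite_mem]

lemma mem_solMS {t n m : ℕ} {G : Matrix (Fin t) (Fin n) (ZMod 2)}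
    {B : Matrix (Fin t) (Fin m) (ZMod 2)} {X : Matrix (Fin n) (Fin m) (ZMod 2)} :
    X ∈ solMS G B ↔ G * X = B := by
  simp [solMS]

lemma solMS_iff {t n m : ℕ} {Q : Fin t → Finset (Fin n)}
    {B : Matrix (Fin t) (Fin m) (ZMod 2)} {X : Matrix (Fin n) (Fin m) (ZMod 2)} :
    X ∈ solMS (qualMatrix Q) B ↔ ∀ k, xorRows X (Q k) = B k := by
  rw [mem_solMS]
  constructor
  · intro h k; rw [← mulQual Q X k, h]
  · intro h
    funext k
    rw [mulQual Q X k, h k]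

lemma rowRestrict_add {n m : ℕ} (F : Finset (Fin n))
    (X Y : Matrix (Fin n) (Fin m) (ZMod 2)) :
    rowRestrict F (X + Y) = rowRestrict F X + rowRestrict F Y := rfl

lemma rowRestrict_sub {n m : ℕ} (F : Finset (Fin n))
    (X Y : Matrix (Fin n) (Fin m) (ZMod 2)) :
    rowRestrict F (X - Y) = rowRestrict F X - rowRestrict F Y := rfl

lemma solMS_shift {t n m : ℕ} (G : Matrix (Fin t) (Fin n) (ZMod 2))
    (B0 B1 : Matrix (Fin t) (Fin m) (ZMod 2)) (Y : Matrix (Fin n) (Fin m) (ZMod 2))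
    (hY : G * Y = B1 - B0) :
    (solMS G B0).map (· + Y) = solMS G B1 := by
  have hfin : Finset.map ⟨(· + Y), add_left_injective Y⟩
      (Finset.univ.filter fun X : Matrix (Fin n) (Fin m) (ZMod 2) => G * X = B0)
      = Finset.univ.filter fun X : Matrix (Fin n) (Fin m) (ZMod 2) => G * X = B1 := by
    ext Z
    simp only [Finset.mem_map, Finset.mem_filter, Finset.mem_univ, true_and,
      Function.Embedding.coeFn_mk]
    constructor
    · rintro ⟨X, hX, rfl⟩
      rw [Matrix.mul_add, hX, hY]
      abel
    · intro hZ
      refine ⟨Z - Y, ?_, by abel⟩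
      rw [Matrix.mul_sub, hZ, hY]
      abel
  have := congrArg Finset.val hfin
  simpa [solMS, Finset.map_val] using this

/-- inserting an SXVCS into the solution sets of the two linear
systems determined by its static reconstruction vectors. -/
theorem stmt2 {n m t : ℕ} (ΓQual : Finset (Finset (Fin n)))
    (hA : IsAccessStructure ΓQual)
    (Q : Fin t → Finset (Fin n))
    (hQmem : ∀ k, Q k ∈ ΓQual) (hQsurj : ∀ A ∈ ΓQual, ∃ k, Q k = A)
    (C0 C1 : Multiset (Matrix (Fin n) (Fin m) (ZMod 2)))
    (E0 E1 : Finset (Fin n) → Fin m → ZMod 2)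
    (hX : XVCS ΓQual C0 C1)
    (hE0 : ∀ A ∈ ΓQual, ∀ M ∈ C0, xorRows M A = E0 A)
    (hE1 : ∀ A ∈ ΓQual, ∀ M ∈ C1, xorRows M A = E1 A)
    (hcon : ∀ A ∈ ΓQual, wt (E0 A) < wt (E1 A))
    (B0 B1 : Matrix (Fin t) (Fin m) (ZMod 2))
    (hB0 : ∀ k, B0 k = E0 (Q k)) (hB1 : ∀ k, B1 k = E1 (Q k)) :
    solMS (qualMatrix Q) B0 ≠ 0 ∧ solMS (qualMatrix Q) B1 ≠ 0 ∧
    (∀ M ∈ C0, M ∈ solMS (qualMatrix Q) B0) ∧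
    (∀ M ∈ C1, M ∈ solMS (qualMatrix Q) B1) ∧
    (∀ X ∈ solMS (qualMatrix Q) B0, ∀ k, xorRows X (Q k) = E0 (Q k)) ∧
    (∀ X ∈ solMS (qualMatrix Q) B1, ∀ k, xorRows X (Q k) = E1 (Q k)) ∧
    SXVCS ΓQual (solMS (qualMatrix Q) B0) (solMS (qualMatrix Q) B1) ∧
    (∀ F : Finset (Fin n), Forb ΓQual F →
      rowRestrict F '' {X : Matrix (Fin n) (Fin m) (ZMod 2) | qualMatrix Q * X = B0}
        = rowRestrict F '' {X : Matrix (Fin n) (Fin m) (ZMod 2) | qualMatrix Q * X = B1}) := by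
  obtain ⟨hC0, hC1, hcontrast, hsec⟩ := hX
  obtain ⟨M0, hM0⟩ := Multiset.exists_mem_of_ne_zero hC0
  obtain ⟨M1, hM1⟩ := Multiset.exists_mem_of_ne_zero hC1
  have hC0sol : ∀ M ∈ C0, M ∈ solMS (qualMatrix Q) B0 := by
    intro M hM
    rw [solMS_iff]
    intro k
    rw [hE0 _ (hQmem k) M hM, hB0]
  have hC1sol : ∀ M ∈ C1, M ∈ solMS (qualMatrix Q) B1 := by
    intro M hM
    rw [solMS_iff]
    intro k
    rw [hE1 _ (hQmem k) M hM, hB1]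
  have hS0ne : solMS (qualMatrix Q) B0 ≠ 0 := by
    intro h
    have := hC0sol M0 hM0
    rw [h] at this
    exact absurd this (Multiset.notMem_zero _)
  have hS1ne : solMS (qualMatrix Q) B1 ≠ 0 := by
    intro h
    have := hC1sol M1 hM1
    rw [h] at this
    exact absurd this (Multiset.notMem_zero _)
  have hsol0 : ∀ X ∈ solMS (qualMatrix Q) B0, ∀ k, xorRows X (Q k) = E0 (Q k) := by
    intro X hXm k
    rw [solMS_iff] at hXm
    rw [hXm k, hB0]
  have hsol1 : ∀ X ∈ solMS (qualMatrix Q) B1, ∀ k, xorRows X (Q k) = E1 (Q k) := by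
    intro X hXm k
    rw [solMS_iff] at hXm
    rw [hXm k, hB1]
  -- for every forbidden F, a shift Y with G*Y = B1 - B0 vanishing on F
  have keyF : ∀ F : Finset (Fin n), Forb ΓQual F →
      ∃ Y : Matrix (Fin n) (Fin m) (ZMod 2),
        qualMatrix Q * Y = B1 - B0 ∧ rowRestrict F Y = 0 := by
    intro F hF
    have hcard1 : Multiset.card C1 ≠ 0 := by simpa [Multiset.card_eq_zero] using hC1
    have hcount0 : 0 < (C0.map (rowRestrict F)).count (rowRestrict F M0) :=
      Multiset.count_pos.2 (Multiset.mem_map_of_mem _ hM0)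
    have h := hsec F hF (rowRestrict F M0)
    have hcount1 : 0 < (C1.map (rowRestrict F)).count (rowRestrict F M0) := by
      rcases Nat.eq_zero_or_pos ((C1.map (rowRestrict F)).count (rowRestrict F M0)) with h0 | h0
      · rw [h0, Nat.mul_zero] at h
        rcases Nat.mul_eq_zero.1 h with h1 | h1
        · exact absurd h1 hcard1
        · omega
      · exact h0
    obtain ⟨N1, hN1, hN1F⟩ := Multiset.mem_map.1 (Multiset.count_pos.1 hcount1)
    refine ⟨N1 - M0, ?_, ?_⟩
    · have hGN1 : qualMatrix Q * N1 = B1 := mem_solMS.1 (hC1sol N1 hN1)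
      have hGM0 : qualMatrix Q * M0 = B0 := mem_solMS.1 (hC0sol M0 hM0)
      rw [Matrix.mul_sub, hGN1, hGM0]
    · rw [rowRestrict_sub, hN1F, sub_self]
  -- static contrast for the solution sets
  have hstatic : StaticContrast ΓQual (solMS (qualMatrix Q) B0) (solMS (qualMatrix Q) B1) := by
    intro A hA
    obtain ⟨k, rfl⟩ := hQsurj A hA
    exact ⟨E0 (Q k), E1 (Q k), fun X hXm => hsol0 X hXm k, fun X hXm => hsol1 X hXm k,
      hcon _ (hQmem k)⟩
  refine ⟨hS0ne, hS1ne, hC0sol, hC1sol, hsol0, hsol1, ⟨⟨hS0ne, hS1ne, ?_, ?_⟩, hstatic⟩, ?_⟩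
  · -- contrast
    intro A hA X0 hX0 X1 hX1
    obtain ⟨k, rfl⟩ := hQsurj A hA
    rw [hsol0 X0 hX0 k, hsol1 X1 hX1 k]
    exact hcon _ (hQmem k)
  · -- security
    intro F hF D
    obtain ⟨Y, hGY, hYF⟩ := keyF F hF
    have hshift := solMS_shift (qualMatrix Q) B0 B1 Y hGY
    have hcardeq : Multiset.card (solMS (qualMatrix Q) B1)
        = Multiset.card (solMS (qualMatrix Q) B0) := by
      rw [← hshift, Multiset.card_map]
    have hmapeq : (solMS (qualMatrix Q) B1).map (rowRestrict F)
        = (solMS (qualMatrix Q) B0).map (rowRestrict F) := by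
      rw [← hshift, Multiset.map_map]
      refine Multiset.map_congr rfl ?_
      intro X _
      show rowRestrict F (X + Y) = rowRestrict F X
      rw [rowRestrict_add, hYF, add_zero]
    rw [hcardeq, hmapeq]
  · -- image equality
    intro F hF
    obtain ⟨Y, hGY, hYF⟩ := keyF F hF
    ext D
    simp only [Set.mem_image, Set.mem_setOf_eq]
    constructor
    · rintro ⟨X, hXm, rfl⟩
      refine ⟨X + Y, ?_, ?_⟩
      · rw [Matrix.mul_add, hXm, hGY]; abel
      · rw [rowRestrict_add, hYF, add_zero]
    · rintro ⟨X, hXm, rfl⟩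
      refine ⟨X - Y, ?_, ?_⟩
      · rw [Matrix.mul_sub, hXm, hGY]; abel
      · rw [rowRestrict_sub, hYF, sub_zero]
end
end

section
/- Let (C0, C1) be an XVCS for an access structure (Γ_Qual, Γ_Forb) with pixel expansion m in which |C0| = |C1| = k; enumerate C0 = {X_{01}, …, X_{0k}} and C1 = {X_{11}, …, X_{1k}} (with multiplicity). Let G be the qualified matrix of an enumeration Γ_Qual = {Q_1, …, Q_t}, and define B_{ij} := G * X_{ij} for i = 0, 1 and j = 1, …, k. Then the pair of multiset sums (Σ_j {X : G * X = B_{0j}}, Σ_j {X : G * X = B_{1j}}) is an XVCS for (Γ_Qual, Γ_Forb) with pixel expansion m; moreover for every Q_s ∈ Γ_Qual, the reconstruction vectors ⊕X[Q_s] achieved by the new collections are exactly the rows (row s of B_{ij}) achieved by the original XVCS. -/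
open scoped Classical

noncomputable section

/-! ### Auxiliary lemmas for `stmt6` -/

lemma mul_qual {t n m : ℕ} (Q : Fin t → Finset (Fin n)) (X : Matrix (Fin n) (Fin m) (ZMod 2))
    (s : Fin t) : (qualMatrix Q * X) s = xorRows X (Q s) := by
  funext j
  simp [Matrix.mul_apply, qualMatrix, xorRows, ite_mul, Finset.sum_ite_mem]

lemma count_sol_eq_card {t n m : ℕ} (G : Matrix (Fin t) (Fin n) (ZMod 2))
    (B : Matrix (Fin t) (Fin m) (ZMod 2)) (F : Finset (Fin n))
    (D : {x // x ∈ F} → Fin m → ZMod 2) :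
    ((solMS G B).map (rowRestrict F)).count D
      = (Finset.univ.filter fun X : Matrix (Fin n) (Fin m) (ZMod 2) =>
          G * X = B ∧ rowRestrict F X = D).card := by
  rw [Multiset.count_map, solMS, ← Finset.filter_val, Finset.filter_filter]
  congr 1
  ext X
  simp [eq_comm]

lemma zmod2_aux : ∀ a b c : ZMod 2, a + b + c + c + b = a := by decide
lemma zmod2_aux2 : ∀ a b : ZMod 2, a + b + b = a := by decide
lemma zmod2_aux3 : ∀ a b : ZMod 2, a + a + b = b := by decide

lemma card_filter_shift {t n m : ℕ} (G : Matrix (Fin t) (Fin n) (ZMod 2)) (F : Finset (Fin n))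
    (D : {x // x ∈ F} → Fin m → ZMod 2) (Y Y' : Matrix (Fin n) (Fin m) (ZMod 2))
    (h : rowRestrict F Y = rowRestrict F Y') :
    (Finset.univ.filter fun X : Matrix (Fin n) (Fin m) (ZMod 2) =>
        G * X = G * Y ∧ rowRestrict F X = D).card
      = (Finset.univ.filter fun X : Matrix (Fin n) (Fin m) (ZMod 2) =>
        G * X = G * Y' ∧ rowRestrict F X = D).card := by
  have key : ∀ (Z W : Matrix (Fin n) (Fin m) (ZMod 2)),
      rowRestrict F Z = rowRestrict F W →
      ∀ X : Matrix (Fin n) (Fin m) (ZMod 2),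
        (G * X = G * Z ∧ rowRestrict F X = D) →
        (G * (X + Z + W) = G * W ∧ rowRestrict F (X + Z + W) = D) := by
    intro Z W hZW X ⟨h1, h2⟩
    constructor
    · rw [Matrix.mul_add, Matrix.mul_add, h1]
      funext a b
      exact zmod2_aux3 ((G*Z) a b) ((G*W) a b)
    · funext i j
      have hzw := congrFun (congrFun hZW i) j
      simp only [rowRestrict] at hzw h2 ⊢
      rw [Matrix.add_apply, Matrix.add_apply, hzw, ← congrFun (congrFun h2 i) j]
      exact zmod2_aux2 _ _
  apply Finset.card_bij' (fun X _ => X + Y + Y') (fun X _ => X + Y' + Y)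
  · intro a ha
    simp only [Finset.mem_filter, Finset.mem_univ, true_and] at ha ⊢
    exact key Y Y' h a ha
  · intro a ha
    simp only [Finset.mem_filter, Finset.mem_univ, true_and] at ha ⊢
    exact key Y' Y h.symm a ha
  · intro a _
    funext i j
    simp only [Matrix.add_apply]
    exact zmod2_aux _ _ _
  · intro a _
    funext i j
    simp only [Matrix.add_apply]
    exact zmod2_aux _ _ _

lemma count_sol_congr {t n m : ℕ} (G : Matrix (Fin t) (Fin n) (ZMod 2)) (F : Finset (Fin n))
    (D : {x // x ∈ F} → Fin m → ZMod 2) (Y Y' : Matrix (Fin n) (Fin m) (ZMod 2))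
    (h : rowRestrict F Y = rowRestrict F Y') :
    ((solMS G (G * Y)).map (rowRestrict F)).count D
      = ((solMS G (G * Y')).map (rowRestrict F)).count D := by
  rw [count_sol_eq_card, count_sol_eq_card]
  exact card_filter_shift G F D Y Y' h

lemma empty_fun_eq {n m : ℕ} (f g : {x // x ∈ (∅ : Finset (Fin n))} → Fin m → ZMod 2) :
    f = g := funext fun i => absurd i.2 (Finset.notMem_empty _)

lemma card_sol {t n m : ℕ} (G : Matrix (Fin t) (Fin n) (ZMod 2))
    (Y Y' : Matrix (Fin n) (Fin m) (ZMod 2)) :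
    Multiset.card (solMS G (G * Y)) = Multiset.card (solMS G (G * Y')) := by
  have hc : ∀ Z : Matrix (Fin n) (Fin m) (ZMod 2),
      Multiset.card (solMS G (G * Z))
        = ((solMS G (G * Z)).map (rowRestrict (∅ : Finset (Fin n)))).count
            (fun _ _ => 0) := by
    intro Z
    rw [Multiset.count_map]
    congr 1
    symm
    rw [Multiset.filter_eq_self]
    intro a _
    exact empty_fun_eq _ _
  rw [hc, hc]
  exact count_sol_congr G ∅ _ Y Y' (empty_fun_eq _ _)

/-- XVCS Insertion Theorem: every XVCS with `|C0| = |C1| = k`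
can be inserted into an XVCS constructed from `2k` linear systems, with the
same reconstruction vectors on every qualified set. -/
theorem stmt6 {n m t k : ℕ} (ΓQual : Finset (Finset (Fin n)))
    (hA : IsAccessStructure ΓQual)
    (Q : Fin t → Finset (Fin n))
    (hQmem : ∀ s, Q s ∈ ΓQual) (hQsurj : ∀ A ∈ ΓQual, ∃ s, Q s = A)
    (X0 X1 : Fin k → Matrix (Fin n) (Fin m) (ZMod 2))
    (hX : XVCS ΓQual (Multiset.map X0 Finset.univ.val) (Multiset.map X1 Finset.univ.val)) :
    XVCS ΓQual (∑ j : Fin k, solMS (qualMatrix Q) (qualMatrix Q * X0 j))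
        (∑ j : Fin k, solMS (qualMatrix Q) (qualMatrix Q * X1 j)) ∧
    ∀ s : Fin t,
      ({v : Fin m → ZMod 2 |
          ∃ X ∈ ∑ j : Fin k, solMS (qualMatrix Q) (qualMatrix Q * X0 j),
            xorRows X (Q s) = v}
        = {v : Fin m → ZMod 2 | ∃ j : Fin k, (qualMatrix Q * X0 j) s = v}) ∧
      ({v : Fin m → ZMod 2 |
          ∃ X ∈ ∑ j : Fin k, solMS (qualMatrix Q) (qualMatrix Q * X1 j),
            xorRows X (Q s) = v}
        = {v : Fin m → ZMod 2 | ∃ j : Fin k, (qualMatrix Q * X1 j) s = v}) := by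
  classical
  set G := qualMatrix Q with hGdef
  obtain ⟨hC0ne, hC1ne, hcontrast, hsec⟩ := hX
  obtain ⟨M₀, hM₀⟩ := Multiset.exists_mem_of_ne_zero hC0ne
  obtain ⟨j0, -, hj0⟩ := Multiset.mem_map.mp hM₀
  have hkpos : 0 < k := j0.pos
  have hmemsum : ∀ (X' : Fin k → Matrix (Fin n) (Fin m) (ZMod 2))
      (X : Matrix (Fin n) (Fin m) (ZMod 2)),
      (X ∈ ∑ j : Fin k, solMS G (G * X' j)) ↔ ∃ j, G * X = G * X' j := by
    intro X' X
    rw [Multiset.mem_sum]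
    simp [mem_solMS]
  have hmemself : ∀ (X' : Fin k → Matrix (Fin n) (Fin m) (ZMod 2)) (j : Fin k),
      X' j ∈ ∑ j' : Fin k, solMS G (G * X' j') :=
    fun X' j => (hmemsum X' (X' j)).mpr ⟨j, rfl⟩
  have hmemorig : ∀ (X' : Fin k → Matrix (Fin n) (Fin m) (ZMod 2)) (j : Fin k),
      X' j ∈ Multiset.map X' Finset.univ.val :=
    fun X' j => Multiset.mem_map.mpr ⟨j, Finset.mem_val.mpr (Finset.mem_univ j), rfl⟩
  refine ⟨⟨?_, ?_, ?_, ?_⟩, ?_⟩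
  · intro h
    have := hmemself X0 j0
    rw [h] at this
    exact Multiset.notMem_zero _ this
  · intro h
    have := hmemself X1 j0
    rw [h] at this
    exact Multiset.notMem_zero _ this
  · -- contrast
    intro Qs hQs M0 hM0 M1 hM1
    obtain ⟨s, rfl⟩ := hQsurj Qs hQs
    obtain ⟨j, hj⟩ := (hmemsum X0 M0).mp hM0
    obtain ⟨j', hj'⟩ := (hmemsum X1 M1).mp hM1
    have e0 : xorRows M0 (Q s) = xorRows (X0 j) (Q s) := by
      rw [← mul_qual Q M0 s, ← mul_qual Q (X0 j) s]
      rw [show qualMatrix Q * M0 = G * M0 from rfl, hj]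
    have e1 : xorRows M1 (Q s) = xorRows (X1 j') (Q s) := by
      rw [← mul_qual Q M1 s, ← mul_qual Q (X1 j') s]
      rw [show qualMatrix Q * M1 = G * M1 from rfl, hj']
    rw [e0, e1]
    exact hcontrast (Q s) (hQmem s) (X0 j) (hmemorig X0 j) (X1 j') (hmemorig X1 j')
  · -- security
    intro F hF D
    have hres : (Multiset.map X0 Finset.univ.val).map (rowRestrict F)
        = (Multiset.map X1 Finset.univ.val).map (rowRestrict F) := by
      apply Multiset.ext.mpr
      intro D'
      have hs := hsec F hF D'
      simp only [Multiset.card_map] at hs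
      rw [show Multiset.card (Finset.univ.val : Multiset (Fin k)) = k from by simp] at hs
      exact Nat.eq_of_mul_eq_mul_left hkpos hs
    set c : Matrix (Fin n) (Fin m) (ZMod 2) → ℕ :=
      fun Y => ((solMS G (G * Y)).map (rowRestrict F)).count D with hcdef
    set c2 : ({x // x ∈ F} → Fin m → ZMod 2) → ℕ :=
      fun E => if h : ∃ Y, rowRestrict F Y = E then c h.choose else 0 with hc2def
    have hfac : ∀ Y, c Y = c2 (rowRestrict F Y) := by
      intro Y
      have hex : ∃ Z, rowRestrict F Z = rowRestrict F Y := ⟨Y, rfl⟩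
      simp only [hc2def, dif_pos hex]
      exact (count_sol_congr G F D hex.choose Y hex.choose_spec).symm
    have hcnt : ∀ (X' : Fin k → Matrix (Fin n) (Fin m) (ZMod 2)),
        ((∑ j : Fin k, solMS G (G * X' j)).map (rowRestrict F)).count D
          = (((Multiset.map X' Finset.univ.val).map (rowRestrict F)).map c2).sum := by
      intro X'
      have hmapsum : Multiset.map (rowRestrict F) (∑ j : Fin k, solMS G (G * X' j))
          = ∑ j : Fin k, Multiset.map (rowRestrict F) (solMS G (G * X' j)) :=
        map_sum (Multiset.mapAddMonoidHom (rowRestrict F)) _ _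
      rw [hmapsum, Multiset.count_sum', Multiset.map_map, Multiset.map_map]
      rw [Finset.sum_congr rfl (fun j _ => hfac (X' j))]
      rfl
    have hcount : ((∑ j : Fin k, solMS G (G * X0 j)).map (rowRestrict F)).count D
        = ((∑ j : Fin k, solMS G (G * X1 j)).map (rowRestrict F)).count D := by
      rw [hcnt X0, hcnt X1, hres]
    have hcardnew : Multiset.card (∑ j : Fin k, solMS G (G * X0 j))
        = Multiset.card (∑ j : Fin k, solMS G (G * X1 j)) := by
      rw [Multiset.card_sum, Multiset.card_sum]
      exact Finset.sum_congr rfl fun j _ => card_sol G (X0 j) (X1 j)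
    rw [hcount, hcardnew]
  · -- reconstruction
    intro s
    constructor
    · ext v
      simp only [Set.mem_setOf_eq]
      constructor
      · rintro ⟨X, hXmem, rfl⟩
        obtain ⟨j, hj⟩ := (hmemsum X0 X).mp hXmem
        exact ⟨j, by rw [← hj, mul_qual]⟩
      · rintro ⟨j, rfl⟩
        exact ⟨X0 j, hmemself X0 j, (mul_qual Q (X0 j) s).symm⟩
    · ext v
      simp only [Set.mem_setOf_eq]
      constructor
      · rintro ⟨X, hXmem, rfl⟩
        obtain ⟨j, hj⟩ := (hmemsum X1 X).mp hXmem
        exact ⟨j, by rw [← hj, mul_qual]⟩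
      · rintro ⟨j, rfl⟩
        exact ⟨X1 j, hmemself X1 j, (mul_qual Q (X1 j) s).symm⟩
end
end

section
/- Let (Γ_Qual, Γ_Forb) be an access structure on Fin n. If there exists a White-SemiSXVCS for (Γ_Qual, Γ_Forb) with pixel expansion m and average contrast α, then there exists an SXVCS for (Γ_Qual, Γ_Forb) with pixel expansion m and average contrast at least α. -/
open scoped Classical

noncomputable section

section Aux

lemma xorRows_add {n m : ℕ} (X Y : Matrix (Fin n) (Fin m) (ZMod 2)) (Q : Finset (Fin n)) :
    xorRows (X + Y) Q = xorRows X Q + xorRows Y Q := by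
  funext j
  simp [xorRows, Matrix.add_apply, Finset.sum_add_distrib]

lemma vec_add_self {m : ℕ} (v : Fin m → ZMod 2) : v + v = 0 :=
  funext fun j => CharTwo.add_self_eq_zero (v j)

lemma vec_cancel₁ {m : ℕ} (a b : Fin m → ZMod 2) : a + (b + a) = b := by
  rw [add_comm b a, ← add_assoc, vec_add_self, zero_add]

lemma vec_cancel₂ {m : ℕ} (a b : Fin m → ZMod 2) : a + (a + b) = b := by
  rw [← add_assoc, vec_add_self, zero_add]

lemma mat_add_self {n m : ℕ} (X : Matrix (Fin n) (Fin m) (ZMod 2)) : X + X = 0 := by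
  ext i j
  simp only [Matrix.add_apply, Matrix.zero_apply]
  exact CharTwo.add_self_eq_zero _

lemma pi2_add_self {α β : Type*} (f : α → β → ZMod 2) : f + f = 0 :=
  funext fun i => funext fun j => CharTwo.add_self_eq_zero _

lemma shift_filter {n m : ℕ} (P0 P1 : Matrix (Fin n) (Fin m) (ZMod 2) → Prop)
    [DecidablePred P0] [DecidablePred P1]
    (T : Matrix (Fin n) (Fin m) (ZMod 2))
    (h01 : ∀ X, P0 X → P1 (X + T)) (h10 : ∀ X, P1 X → P0 (X + T)) :
    Finset.univ.filter P1 =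
      (Finset.univ.filter P0).map ⟨fun X => X + T, add_left_injective T⟩ := by
  ext X
  simp only [Finset.mem_map, Finset.mem_filter, Finset.mem_univ, true_and,
    Function.Embedding.coeFn_mk]
  constructor
  · intro hX
    exact ⟨X + T, h10 X hX, by rw [add_assoc, mat_add_self, add_zero]⟩
  · rintro ⟨Y, hY, rfl⟩
    exact h01 Y hY

lemma sum_map_const {α : Type*} (C : Multiset α) (f : α → ℚ) (c : ℚ)
    (h : ∀ M ∈ C, f M = c) : (C.map f).sum = (Multiset.card C : ℚ) * c := by
  rw [Multiset.map_congr rfl h, Multiset.map_const', Multiset.sum_replicate, nsmul_eq_mul]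

lemma sum_map_swap {α γ : Type*} (C : Multiset α) (s : Finset γ) (f : γ → α → ℚ) :
    ∑ Q ∈ s, (C.map (f Q)).sum = (C.map fun M => ∑ Q ∈ s, f Q M).sum := by
  induction C using Multiset.induction with
  | empty => simp
  | cons a C ih => simp [Finset.sum_add_distrib, ih]

end Aux

set_option maxHeartbeats 1000000 in
/-- a White-SemiSXVCS with pixel expansion `m` and average
contrast `α` yields an SXVCS with pixel expansion `m` and average contrast
at least `α`. -/
theorem stmt8 {n m : ℕ} (ΓQual : Finset (Finset (Fin n)))
    (hA : IsAccessStructure ΓQual) (α : ℚ)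
    (h : ∃ C0 C1 : Multiset (Matrix (Fin n) (Fin m) (ZMod 2)),
      XVCS ΓQual C0 C1 ∧
      (∀ A ∈ ΓQual, ∃ E0 : Fin m → ZMod 2, ∀ M ∈ C0, xorRows M A = E0) ∧
      avgContrast ΓQual C0 C1 = α) :
    ∃ C0 C1 : Multiset (Matrix (Fin n) (Fin m) (ZMod 2)),
      SXVCS ΓQual C0 C1 ∧ α ≤ avgContrast ΓQual C0 C1 := by
  obtain ⟨C0, C1, ⟨hC0, hC1, hcon, hsec⟩, hW, hα⟩ := h
  obtain ⟨M0s, hM0s⟩ := Multiset.exists_mem_of_ne_zero hC0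
  have hC1fs : C1.toFinset.Nonempty := by
    obtain ⟨x, hx⟩ := Multiset.exists_mem_of_ne_zero hC1
    exact ⟨x, Multiset.mem_toFinset.2 hx⟩
  obtain ⟨M1s, hM1sfs, hmax⟩ := Finset.exists_max_image C1.toFinset
      (fun M => ∑ Q ∈ ΓQual, (wt (xorRows M Q) : ℚ)) hC1fs
  have hM1s : M1s ∈ C1 := Multiset.mem_toFinset.1 hM1sfs
  have hE : ∀ Q ∈ ΓQual, ∀ M ∈ C0, xorRows M Q = xorRows M0s Q := by
    intro Q hQ M hM
    obtain ⟨E0, hE0⟩ := hW Q hQ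
    rw [hE0 M hM, hE0 M0s hM0s]
  set S0 := Finset.univ.filter
    (fun X : Matrix (Fin n) (Fin m) (ZMod 2) => ∀ Q ∈ ΓQual, xorRows X Q = xorRows M0s Q)
    with hS0def
  set S1 := Finset.univ.filter
    (fun X : Matrix (Fin n) (Fin m) (ZMod 2) => ∀ Q ∈ ΓQual, xorRows X Q = xorRows M1s Q)
    with hS1def
  have hM0mem : M0s ∈ S0 := Finset.mem_filter.2 ⟨Finset.mem_univ _, fun Q _ => rfl⟩
  have hM1mem : M1s ∈ S1 := Finset.mem_filter.2 ⟨Finset.mem_univ _, fun Q _ => rfl⟩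
  have hS0ne : S0.val ≠ 0 := by
    intro hcontra
    rw [Finset.val_eq_zero] at hcontra
    rw [hcontra] at hM0mem
    exact absurd hM0mem (Finset.notMem_empty _)
  have hS1ne : S1.val ≠ 0 := by
    intro hcontra
    rw [Finset.val_eq_zero] at hcontra
    rw [hcontra] at hM1mem
    exact absurd hM1mem (Finset.notMem_empty _)
  have hval0 : ∀ M ∈ S0.val, ∀ Q ∈ ΓQual, xorRows M Q = xorRows M0s Q :=
    fun M hM => (Finset.mem_filter.1 (Finset.mem_def.mpr hM)).2
  have hval1 : ∀ M ∈ S1.val, ∀ Q ∈ ΓQual, xorRows M Q = xorRows M1s Q :=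
    fun M hM => (Finset.mem_filter.1 (Finset.mem_def.mpr hM)).2
  -- positivity facts
  obtain ⟨Q0, hQ0⟩ := hA.1
  have hwtle : ∀ v : Fin m → ZMod 2, wt v ≤ m := fun v =>
    le_trans (Finset.card_filter_le _ _) (by simp)
  have hmpos : 0 < m :=
    lt_of_lt_of_le (Nat.lt_of_le_of_lt (Nat.zero_le _) (hcon Q0 hQ0 M0s hM0s M1s hM1s)) (hwtle _)
  have hm : 0 < (m : ℚ) := by exact_mod_cast hmpos
  have hg : 0 < (ΓQual.card : ℚ) := by exact_mod_cast Finset.card_pos.2 ⟨Q0, hQ0⟩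
  have hb : 0 < (Multiset.card C1 : ℚ) := by
    exact_mod_cast Multiset.card_pos.2 hC1
  have ha0 : (Multiset.card C0 : ℚ) ≠ 0 := by
    have : 0 < (Multiset.card C0 : ℚ) := by exact_mod_cast Multiset.card_pos.2 hC0
    exact ne_of_gt this
  have hb0 : (Multiset.card S0.val : ℚ) ≠ 0 := by
    have : 0 < (Multiset.card S0.val : ℚ) := by exact_mod_cast Multiset.card_pos.2 hS0ne
    exact ne_of_gt this
  have hb1 : (Multiset.card S1.val : ℚ) ≠ 0 := by
    have : 0 < (Multiset.card S1.val : ℚ) := by exact_mod_cast Multiset.card_pos.2 hS1ne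
    exact ne_of_gt this
  refine ⟨S0.val, S1.val, ⟨⟨hS0ne, hS1ne, ?_, ?_⟩, ?_⟩, ?_⟩
  · -- contrast
    intro Q hQ M0 hM0 M1 hM1
    rw [hval0 M0 hM0 Q hQ, hval1 M1 hM1 Q hQ]
    exact hcon Q hQ M0s hM0s M1s hM1s
  · -- security
    intro F hF D
    have hc1pos : 0 < (C1.map (rowRestrict F)).count (rowRestrict F M1s) :=
      Multiset.count_pos.2 (Multiset.mem_map_of_mem _ hM1s)
    have hc0pos : 0 < (C0.map (rowRestrict F)).count (rowRestrict F M1s) := by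
      have hs := hsec F hF (rowRestrict F M1s)
      have h0 : 0 < Multiset.card C0 := Multiset.card_pos.2 hC0
      by_contra hc
      push_neg at hc
      have hz : (C0.map (rowRestrict F)).count (rowRestrict F M1s) = 0 := Nat.le_zero.1 hc
      rw [hz, Nat.mul_zero] at hs
      rcases Nat.mul_eq_zero.1 hs.symm with h' | h'
      · omega
      · omega
    obtain ⟨M0', hM0', hres⟩ := Multiset.mem_map.1 (Multiset.count_pos.1 hc0pos)
    have hshiftF : S1 = S0.map ⟨fun X => X + (M1s + M0'), add_left_injective _⟩ := by
      rw [hS0def, hS1def]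
      refine shift_filter _ _ (M1s + M0') ?_ ?_
      · intro X hXq Q hQ
        rw [xorRows_add, xorRows_add, hXq Q hQ, hE Q hQ M0' hM0']
        exact vec_cancel₁ _ _
      · intro X hXq Q hQ
        rw [xorRows_add, xorRows_add, hXq Q hQ, hE Q hQ M0' hM0']
        exact vec_cancel₂ _ _
    have hTres : rowRestrict F (M1s + M0') = 0 := by
      rw [rowRestrict_add, hres]
      exact pi2_add_self _
    have hvalshift : S1.val = S0.val.map (fun X => X + (M1s + M0')) := by
      rw [hshiftF, Finset.map_val]
      rfl
    have hmapeq : S1.val.map (rowRestrict F) = S0.val.map (rowRestrict F) := by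
      rw [hvalshift, Multiset.map_map]
      refine Multiset.map_congr rfl ?_
      intro X _
      show rowRestrict F (X + (M1s + M0')) = rowRestrict F X
      rw [rowRestrict_add, hTres, add_zero]
    have hcardval : Multiset.card S1.val = Multiset.card S0.val := by
      rw [hvalshift, Multiset.card_map]
    rw [hcardval, hmapeq]
  · -- static contrast
    intro Q hQ
    exact ⟨xorRows M0s Q, xorRows M1s Q, fun M hM => hval0 M hM Q hQ,
      fun M hM => hval1 M hM Q hQ, hcon Q hQ M0s hM0s M1s hM1s⟩
  · -- average contrast
    have hnew : avgContrast ΓQual S0.val S1.val =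
        (∑ Q ∈ ΓQual, (((wt (xorRows M1s Q) : ℚ) - (wt (xorRows M0s Q) : ℚ)) / (m : ℚ)))
          / (ΓQual.card : ℚ) := by
      unfold avgContrast
      congr 1
      apply Finset.sum_congr rfl
      intro Q hQ
      congr 1
      rw [sum_map_const _ _ ((wt (xorRows M1s Q) : ℚ)) (fun M hM => by rw [hval1 M hM Q hQ]),
        sum_map_const _ _ ((wt (xorRows M0s Q) : ℚ)) (fun M hM => by rw [hval0 M hM Q hQ]),
        mul_div_cancel_left₀ _ hb1, mul_div_cancel_left₀ _ hb0]
    have hold : avgContrast ΓQual C0 C1 =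
        (∑ Q ∈ ΓQual, (((C1.map fun M => (wt (xorRows M Q) : ℚ)).sum / (Multiset.card C1 : ℚ)
            - (wt (xorRows M0s Q) : ℚ)) / (m : ℚ))) / (ΓQual.card : ℚ) := by
      unfold avgContrast
      congr 1
      apply Finset.sum_congr rfl
      intro Q hQ
      congr 2
      rw [sum_map_const _ _ ((wt (xorRows M0s Q) : ℚ)) (fun M hM => by rw [hE Q hQ M hM]),
        mul_div_cancel_left₀ _ ha0]
    have key : ∑ Q ∈ ΓQual, (C1.map fun M => (wt (xorRows M Q) : ℚ)).sum / (Multiset.card C1 : ℚ)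
        ≤ ∑ Q ∈ ΓQual, (wt (xorRows M1s Q) : ℚ) := by
      rw [← Finset.sum_div, sum_map_swap, div_le_iff₀ hb]
      calc (C1.map fun M => ∑ Q ∈ ΓQual, (wt (xorRows M Q) : ℚ)).sum
          ≤ (C1.map fun _ => ∑ Q ∈ ΓQual, (wt (xorRows M1s Q) : ℚ)).sum :=
            Multiset.sum_map_le_sum_map _ _ (fun M hM => hmax M (Multiset.mem_toFinset.2 hM))
        _ = (Multiset.card C1 : ℚ) * ∑ Q ∈ ΓQual, (wt (xorRows M1s Q) : ℚ) :=
            sum_map_const _ _ _ (fun _ _ => rfl)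
        _ = (∑ Q ∈ ΓQual, (wt (xorRows M1s Q) : ℚ)) * (Multiset.card C1 : ℚ) := mul_comm _ _
    rw [← hα, hold, hnew]
    apply (div_le_div_iff_of_pos_right hg).2
    rw [← Finset.sum_div, ← Finset.sum_div]
    apply (div_le_div_iff_of_pos_right hm).2
    rw [Finset.sum_sub_distrib, Finset.sum_sub_distrib]
    exact sub_le_sub_right key _
end
end

section
/- Let Γ_Qual be a nonempty finite family of nonempty subsets of Fin n, let Γ^- be its minimal elements under inclusion, and let Γ_Forb := {F ⊆ Fin n : no Q ∈ Γ^- satisfies Q ⊆ F}. Suppose that for every subfamily S ⊆ Γ_Qual of odd cardinality, the symmetric difference Δ(S) of the members of S (equivalently, the support of the GF(2)-sum of their indicator vectors) is not in Γ_Forb, i.e. there is some Q ∈ Γ^- with Q ⊆ Δ(S). Then for every subfamily S ⊆ Γ_Qual of even cardinality, either Δ(S) = ∅ or there is no Q ∈ Γ^- with Δ(S) ⊆ Q. -/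
open scoped Classical

noncomputable section

lemma mem_symmDiffFam {n : ℕ} (S : Finset (Finset (Fin n))) (i : Fin n) :
    i ∈ symmDiffFam S ↔ Odd (S.filter fun A => i ∈ A).card := by
  simp [symmDiffFam]

lemma symmDiffFam_insert {n : ℕ} (S : Finset (Finset (Fin n))) (Q : Finset (Fin n))
    (hQ : Q ∉ S) (i : Fin n) :
    i ∈ symmDiffFam (insert Q S) ↔ Xor' (i ∈ Q) (i ∈ symmDiffFam S) := by
  rw [mem_symmDiffFam, mem_symmDiffFam, Finset.filter_insert]
  by_cases hi : i ∈ Q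
  · have hQ' : Q ∉ S.filter fun A => i ∈ A := fun h => hQ (Finset.mem_of_mem_filter _ h)
    simp [hi, Finset.card_insert_of_notMem hQ', Nat.odd_add_one, Xor']
  · simp [hi, Xor']

/-- if every odd subfamily of `ΓQual` has symmetric difference
not in `Γ_Forb`, then every even subfamily has symmetric difference empty or
contained in no minimal qualified set. -/
theorem stmt11 {n : ℕ} (ΓQual : Finset (Finset (Fin n)))
    (hA : IsAccessStructure ΓQual)
    (hodd : ∀ S ⊆ ΓQual, Odd S.card → ¬ Forb ΓQual (symmDiffFam S)) :
    ∀ S ⊆ ΓQual, Even S.card →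
      symmDiffFam S = ∅ ∨ ∀ Q ∈ minQual ΓQual, ¬ symmDiffFam S ⊆ Q := by
  intro S hS hEven
  by_contra h
  push_neg at h
  obtain ⟨hne, Q, hQmin, hsub⟩ := h
  have hQΓ : Q ∈ ΓQual := Finset.mem_of_mem_filter _ hQmin
  have hQmin' : ∀ Q' ∈ ΓQual, Q' ⊆ Q → Q' = Q := (Finset.mem_filter.mp hQmin).2
  -- build odd family T with Δ(T) = Δ(S) Δ Q
  obtain ⟨T, hTsub, hTodd, hTmem⟩ :
      ∃ T ⊆ ΓQual, Odd T.card ∧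
        ∀ i, i ∈ symmDiffFam T ↔ Xor' (i ∈ Q) (i ∈ symmDiffFam S) := by
    by_cases hQS : Q ∈ S
    · refine ⟨S.erase Q, (Finset.erase_subset _ _).trans hS, ?_, ?_⟩
      · have hpos : 0 < S.card := Finset.card_pos.mpr ⟨Q, hQS⟩
        have hce := Finset.card_erase_of_mem hQS
        rcases hEven with ⟨k, hk⟩
        refine Nat.odd_iff.mpr ?_
        omega
      · intro i
        have hins : S = insert Q (S.erase Q) := (Finset.insert_erase hQS).symm
        have := symmDiffFam_insert (S.erase Q) Q (Finset.notMem_erase _ _) i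
        rw [← hins] at this
        rw [this]
        by_cases hi : i ∈ Q <;> by_cases hj : i ∈ symmDiffFam (S.erase Q) <;>
          simp [hi, hj, Xor']
    · refine ⟨insert Q S, Finset.insert_subset hQΓ hS, ?_, fun i => symmDiffFam_insert S Q hQS i⟩
      rw [Finset.card_insert_of_notMem hQS]
      rcases hEven with ⟨k, hk⟩
      exact Nat.odd_iff.mpr (by omega)
  have := hodd T hTsub hTodd
  unfold Forb at this
  push_neg at this
  obtain ⟨Q', hQ'min, hQ'sub⟩ := this
  -- Δ(T) ⊆ Q and disjoint from Δ(S)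
  have hTQ : symmDiffFam T ⊆ Q := by
    intro i hi
    rcases (hTmem i).mp hi with ⟨h1, _⟩ | ⟨h2, h1⟩
    · exact h1
    · exact absurd (hsub h2) h1
  have hQ'Γ : Q' ∈ ΓQual := Finset.mem_of_mem_filter _ hQ'min
  have hQ'Q : Q' = Q := hQmin' Q' hQ'Γ (hQ'sub.trans hTQ)
  obtain ⟨x, hx⟩ := hne
  have hxQ : x ∈ Q := hsub hx
  have hxT : x ∈ symmDiffFam T := hQ'sub (hQ'Q ▸ hxQ)
  rcases (hTmem x).mp hxT with ⟨_, h2⟩ | ⟨_, h1⟩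
  · exact h2 hx
  · exact h1 hxQ
end
end

section
/- Let (Γ_Qual, Γ_Forb) be an access structure on Fin n. There exists an XVCS for (Γ_Qual, Γ_Forb) with pixel expansion 1 if and only if for every subfamily S ⊆ Γ_Qual of odd cardinality, the symmetric difference Δ(S) of the members of S is not in Γ_Forb (equivalently, there is some Q ∈ Γ^- with Q ⊆ Δ(S)). -/
open scoped Classical

noncomputable section

section Aux

lemma dual_solvable {ι : Type} [Fintype ι] {n : ℕ}
    (A : Matrix ι (Fin n) (ZMod 2)) (b : ι → ZMod 2)
    (h : ∀ c : ι → ZMod 2, Matrix.vecMul c A = 0 → dotProduct c b = 0) :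
    ∃ x : Fin n → ZMod 2, A.mulVec x = b := by
  by_contra hc
  push_neg at hc
  have hb : b ∉ LinearMap.range A.mulVecLin := by
    rintro ⟨x, hx⟩
    exact hc x (by simpa [Matrix.mulVecLin_apply] using hx)
  set p := LinearMap.range A.mulVecLin with hp
  have hq : p.mkQ b ≠ 0 := by
    simpa [Submodule.Quotient.mk_eq_zero] using hb
  have := (Module.forall_dual_apply_eq_zero_iff (ZMod 2) (p.mkQ b)).not.mpr hq
  push_neg at this
  obtain ⟨g, hg⟩ := this
  set f : (ι → ZMod 2) →ₗ[ZMod 2] ZMod 2 := g ∘ₗ p.mkQ with hf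
  have hker : ∀ v ∈ p, f v = 0 := by
    intro v hv
    simp [hf, (Submodule.Quotient.mk_eq_zero p).2 hv]
  set c : ι → ZMod 2 := fun i => f (fun j => if i = j then 1 else 0) with hcdef
  have hfc : ∀ v, f v = dotProduct c v := by
    intro v
    rw [LinearMap.pi_apply_eq_sum_univ f v, dotProduct]
    exact Finset.sum_congr rfl fun i _ => by rw [smul_eq_mul, mul_comm]
  have hA0 : Matrix.vecMul c A = 0 := by
    funext j
    have := hker (A.mulVec (fun k => if k = j then 1 else 0)) ⟨_, rfl⟩
    rw [hfc, Matrix.dotProduct_mulVec] at this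
    simpa [dotProduct, Finset.sum_ite_eq'] using this
  have : dotProduct c b = 0 := h c hA0
  rw [← hfc] at this
  exact hg (by simpa [hf] using this)

lemma natCast_zmod2 (m : ℕ) : ((m : ZMod 2)) = if Odd m then 1 else 0 := by
  induction m with
  | zero => simp
  | succ k ih =>
    rw [Nat.cast_succ, ih]
    by_cases hk : Odd k
    · simp [hk, Nat.odd_add_one, Nat.not_even_iff_odd.mpr hk]; decide
    · simp [hk, Nat.odd_add_one, Nat.not_odd_iff_even.mp hk]

lemma sum_symmDiff {n : ℕ} (S : Finset (Finset (Fin n))) (v : Fin n → ZMod 2) :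
    ∑ Q ∈ S, ∑ i ∈ Q, v i = ∑ i ∈ symmDiffFam S, v i := by
  have lhs : ∑ Q ∈ S, ∑ i ∈ Q, v i
      = ∑ i : Fin n, (((S.filter fun A => i ∈ A).card : ZMod 2)) * v i := by
    have e1 : ∀ Q ∈ S, ∑ i ∈ Q, v i = ∑ i : Fin n, if i ∈ Q then v i else 0 := by
      intro Q _; rw [Finset.sum_ite_mem, Finset.univ_inter]
    rw [Finset.sum_congr rfl e1, Finset.sum_comm]
    refine Finset.sum_congr rfl fun i _ => ?_
    rw [Finset.sum_ite, Finset.sum_const_zero, add_zero, Finset.sum_const,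
      nsmul_eq_mul]
  rw [lhs, symmDiffFam, Finset.sum_filter]
  refine Finset.sum_congr rfl fun i _ => ?_
  rw [natCast_zmod2]
  by_cases hodd : Odd (S.filter fun A => i ∈ A).card <;> simp [hodd]

lemma exists_sol {n : ℕ} (ΓQual : Finset (Finset (Fin n)))
    (h : ∀ S ⊆ ΓQual, Odd S.card → ¬ Forb ΓQual (symmDiffFam S))
    (F : Finset (Fin n)) (hF : Forb ΓQual F) :
    ∃ y : Fin n → ZMod 2, (∀ Q ∈ ΓQual, ∑ i ∈ Q, y i = 1) ∧ ∀ i ∈ F, y i = 0 := by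
  set A : Matrix ({Q // Q ∈ ΓQual} ⊕ {i // i ∈ F}) (Fin n) (ZMod 2) := fun k j =>
    Sum.rec (fun Q => if j ∈ Q.1 then 1 else 0) (fun i => if j = i.1 then 1 else 0) k
    with hA
  set b : ({Q // Q ∈ ΓQual} ⊕ {i // i ∈ F}) → ZMod 2 := fun k => Sum.rec (fun _ => 1) (fun _ => 0) k with hb
  have main : ∀ c : ({Q // Q ∈ ΓQual} ⊕ {i // i ∈ F}) → ZMod 2,
      Matrix.vecMul c A = 0 → dotProduct c b = 0 := by
    intro c hc
    set S : Finset (Finset (Fin n)) :=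
      (ΓQual.attach.filter fun Q => c (Sum.inl Q) = 1).image Subtype.val with hS
    have hSsub : S ⊆ ΓQual := by
      intro Q hQ
      obtain ⟨Q', _, rfl⟩ := Finset.mem_image.mp hQ
      exact Q'.2
    have key : ∀ w : Finset (Fin n) → ZMod 2,
        ∑ Q ∈ ΓQual.attach, c (Sum.inl Q) * w Q.1 = ∑ Q ∈ S, w Q := by
      intro w
      rw [hS, Finset.sum_image (by intro a _ b _ hab; exact Subtype.ext hab)]
      rw [← Finset.sum_filter_add_sum_filter_not ΓQual.attach
        (fun Q => c (Sum.inl Q) = 1)]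
      have h2 : ∑ Q ∈ ΓQual.attach.filter (fun Q => ¬ c (Sum.inl Q) = 1),
          c (Sum.inl Q) * w Q.1 = 0 := by
        refine Finset.sum_eq_zero fun Q hQ => ?_
        have hne := (Finset.mem_filter.mp hQ).2
        have hc0 : c (Sum.inl Q) = 0 := by
          have : ∀ a : ZMod 2, ¬ a = 1 → a = 0 := by decide
          exact this _ hne
        rw [hc0, zero_mul]
      rw [h2, add_zero]
      refine Finset.sum_congr rfl fun Q hQ => ?_
      rw [(Finset.mem_filter.mp hQ).2, one_mul]
    have hvec : ∀ j : Fin n,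
        (∑ Q ∈ ΓQual.attach, c (Sum.inl Q) * (if j ∈ Q.1 then (1:ZMod 2) else 0))
          + ∑ i ∈ F.attach, c (Sum.inr i) * (if j = i.1 then 1 else 0) = 0 := by
      intro j
      have h0 := congrFun hc j
      rw [Matrix.vecMul, dotProduct] at h0
      simp only [Pi.zero_apply, Fintype.sum_sum_type, Finset.univ_eq_attach] at h0
      exact h0
    have heven : ∀ j : Fin n, j ∉ F → ¬ Odd (S.filter fun A => j ∈ A).card := by
      intro j hjF
      have h2 : ∑ i ∈ F.attach, c (Sum.inr i) * (if j = i.1 then (1:ZMod 2) else 0) = 0 := by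
        refine Finset.sum_eq_zero fun i _ => ?_
        have : ¬ j = i.1 := fun hji => hjF (hji ▸ i.2)
        simp [this]
      have h1 := hvec j
      rw [h2, add_zero, key (fun Q => if j ∈ Q then 1 else 0)] at h1
      rw [Finset.sum_ite, Finset.sum_const_zero, add_zero, Finset.sum_const,
        nsmul_eq_mul, mul_one, natCast_zmod2] at h1
      intro hodd
      rw [if_pos hodd] at h1
      exact one_ne_zero h1
    have hsub : symmDiffFam S ⊆ F := by
      intro j hj
      by_contra hjF
      exact heven j hjF (Finset.mem_filter.mp hj).2
    have hForbS : Forb ΓQual (symmDiffFam S) := by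
      intro Q hQ hQs
      exact hF Q hQ (hQs.trans hsub)
    have hSeven : ¬ Odd S.card := fun hodd => h S hSsub hodd hForbS
    rw [dotProduct, Fintype.sum_sum_type, Finset.univ_eq_attach,
      Finset.univ_eq_attach]
    have e1 : ∑ Q ∈ ΓQual.attach, c (Sum.inl Q) * b (Sum.inl Q)
        = ∑ Q ∈ ΓQual.attach, c (Sum.inl Q) * (fun _ : Finset (Fin n) => (1:ZMod 2)) Q.1 :=
      rfl
    have e2 : ∑ i ∈ F.attach, c (Sum.inr i) * b (Sum.inr i) = 0 := by
      refine Finset.sum_eq_zero fun i _ => ?_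
      simp [hb]
    rw [e1, e2, add_zero, key (fun _ => 1), Finset.sum_const, nsmul_eq_mul, mul_one,
      natCast_zmod2, if_neg hSeven]
  obtain ⟨x, hx⟩ := dual_solvable A b main
  refine ⟨x, ?_, ?_⟩
  · intro Q hQ
    have := congrFun hx (Sum.inl ⟨Q, hQ⟩)
    rw [Matrix.mulVec, dotProduct] at this
    simp only [hA, hb] at this
    rw [← this]
    rw [show (∑ j : Fin n, (if j ∈ Q then (1:ZMod 2) else 0) * x j)
      = ∑ j : Fin n, (if j ∈ Q then x j else 0) from
        Finset.sum_congr rfl fun j _ => by by_cases hj : j ∈ Q <;> simp [hj]]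
    rw [Finset.sum_ite_mem, Finset.univ_inter]
  · intro i hi
    have := congrFun hx (Sum.inr ⟨i, hi⟩)
    rw [Matrix.mulVec, dotProduct] at this
    simp only [hA, hb] at this
    rw [← this]
    simp [Finset.sum_ite_eq]

end Aux

/-- an XVCS with pixel expansion 1 exists iff the symmetric
difference of every odd subfamily of `ΓQual` is not forbidden. -/
theorem stmt12 {n : ℕ} (ΓQual : Finset (Finset (Fin n)))
    (hA : IsAccessStructure ΓQual) :
    (∃ C0 C1 : Multiset (Matrix (Fin n) (Fin 1) (ZMod 2)), XVCS ΓQual C0 C1) ↔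
      ∀ S ⊆ ΓQual, Odd S.card → ¬ Forb ΓQual (symmDiffFam S) := by
  constructor
  · rintro ⟨C0, C1, h0ne, h1ne, hcon, hsec⟩ S hS hodd hForb
    obtain ⟨M0, hM0⟩ := Multiset.exists_mem_of_ne_zero h0ne
    obtain ⟨M1, hM1⟩ := Multiset.exists_mem_of_ne_zero h1ne
    have wt_le : ∀ v : Fin 1 → ZMod 2, wt v ≤ 1 := by
      intro v
      calc wt v ≤ (Finset.univ : Finset (Fin 1)).card := Finset.card_filter_le _ _
      _ = 1 := by simp
    have split : ∀ {u v : Fin 1 → ZMod 2}, wt u < wt v →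
        (∀ j, u j = 0) ∧ (∀ j, v j = 1) := by
      intro u v huv
      have hv := wt_le v
      have hu : wt u = 0 := by omega
      have hv1 : wt v = 1 := by omega
      constructor
      · intro j
        have hj : j ∉ Finset.univ.filter (fun j => u j = 1) := by
          rw [Finset.card_eq_zero.mp hu]; exact Finset.notMem_empty j
        rw [Finset.mem_filter] at hj
        push_neg at hj
        have hne := hj (Finset.mem_univ j)
        have hz : ∀ a : ZMod 2, ¬ a = 1 → a = 0 := by decide
        exact hz _ hne
      · intro j
        have hfull : Finset.univ.filter (fun j => v j = 1) = Finset.univ := by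
          apply Finset.eq_univ_of_card
          show wt v = Fintype.card (Fin 1)
          rw [hv1]; simp
        have : j ∈ Finset.univ.filter (fun j => v j = 1) := by
          rw [hfull]; exact Finset.mem_univ j
        exact (Finset.mem_filter.mp this).2
    have hx0 : ∀ M ∈ C0, ∀ Q ∈ ΓQual, ∀ j, xorRows M Q j = 0 := by
      intro M hM Q hQ j
      exact (split (hcon Q hQ M hM M1 hM1)).1 j
    have hx1 : ∀ M ∈ C1, ∀ Q ∈ ΓQual, ∀ j, xorRows M Q j = 1 := by
      intro M hM Q hQ j
      exact (split (hcon Q hQ M0 hM0 M hM)).2 j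
    set F := symmDiffFam S with hFdef
    have hsum0 : ∀ M ∈ C0, ∑ i ∈ F, M i 0 = 0 := by
      intro M hM
      rw [hFdef, ← sum_symmDiff S (fun i => M i 0)]
      exact Finset.sum_eq_zero fun Q hQ => hx0 M hM Q (hS hQ) 0
    have hsum1 : ∀ M ∈ C1, ∑ i ∈ F, M i 0 = 1 := by
      intro M hM
      rw [hFdef, ← sum_symmDiff S (fun i => M i 0)]
      rw [show (∑ Q ∈ S, ∑ i ∈ Q, M i 0) = ∑ _Q ∈ S, (1 : ZMod 2) from
        Finset.sum_congr rfl fun Q hQ => hx1 M hM Q (hS hQ) 0]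
      rw [Finset.sum_const, nsmul_eq_mul, mul_one, natCast_zmod2, if_pos hodd]
    set D := rowRestrict F M0 with hD
    have hcount0 : 0 < (C0.map (rowRestrict F)).count D := by
      rw [Multiset.count_pos]
      exact Multiset.mem_map_of_mem _ hM0
    have hcount1 : (C1.map (rowRestrict F)).count D = 0 := by
      rw [Multiset.count_eq_zero]
      intro hmem
      obtain ⟨M, hM, hMD⟩ := Multiset.mem_map.mp hmem
      have : ∑ i ∈ F, M i 0 = ∑ i ∈ F, M0 i 0 := by
        refine Finset.sum_congr rfl fun i hi => ?_
        have := congrFun (congrFun hMD ⟨i, hi⟩) 0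
        exact this
      rw [hsum1 M hM, hsum0 M0 hM0] at this
      exact one_ne_zero this
    have := hsec F hForb D
    rw [hcount1, Nat.mul_zero] at this
    rcases Nat.mul_eq_zero.mp this with h | h
    · exact h1ne (Multiset.card_eq_zero.mp h)
    · omega
  · intro h
    have hForbEmpty : Forb ΓQual (∅ : Finset (Fin n)) := by
      intro Q hQ hQsub
      have hQ' : Q ∈ ΓQual := (Finset.mem_filter.mp hQ).1
      obtain ⟨i, hi⟩ := hA.2 Q hQ'
      exact Finset.notMem_empty i (hQsub hi)
    set C0fin : Finset (Matrix (Fin n) (Fin 1) (ZMod 2)) :=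
      Finset.univ.filter fun M => ∀ Q ∈ ΓQual, xorRows M Q = 0 with hC0fin
    set C1fin : Finset (Matrix (Fin n) (Fin 1) (ZMod 2)) :=
      Finset.univ.filter fun M => ∀ Q ∈ ΓQual, xorRows M Q = fun _ => 1 with hC1fin
    have hmem0 : ∀ M, M ∈ C0fin ↔ ∀ Q ∈ ΓQual, xorRows M Q = 0 := by
      intro M; rw [hC0fin, Finset.mem_filter]; simp
    have hmem1 : ∀ M, M ∈ C1fin ↔ ∀ Q ∈ ΓQual, xorRows M Q = fun _ => 1 := by
      intro M; rw [hC1fin, Finset.mem_filter]; simp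
    refine ⟨C0fin.val, C1fin.val, ?_, ?_, ?_, ?_⟩
    · -- C0 nonempty
      have : (0 : Matrix (Fin n) (Fin 1) (ZMod 2)) ∈ C0fin := by
        rw [hmem0]
        intro Q hQ
        funext j
        simp [xorRows]
      intro hz
      rw [Finset.val_eq_zero] at hz
      rw [hz] at this
      exact Finset.notMem_empty _ this
    · -- C1 nonempty
      obtain ⟨y, hy1, _⟩ := exists_sol ΓQual h ∅ hForbEmpty
      have : (fun i _ => y i : Matrix (Fin n) (Fin 1) (ZMod 2)) ∈ C1fin := by
        refine (hmem1 _).mpr ?_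
        intro Q hQ
        funext j
        exact hy1 Q hQ
      intro hz
      rw [Finset.val_eq_zero] at hz
      rw [hz] at this
      exact Finset.notMem_empty _ this
    · -- contrast
      intro Q hQ M0 hM0 M1 hM1
      have h0 : xorRows M0 Q = 0 := (hmem0 M0).mp hM0 Q hQ
      have h1 : xorRows M1 Q = fun _ => 1 := (hmem1 M1).mp hM1 Q hQ
      rw [h0, h1]
      have w0 : wt (0 : Fin 1 → ZMod 2) = 0 := by
        rw [wt, Finset.card_eq_zero]
        ext j; simp
      have w1 : wt (fun _ : Fin 1 => (1 : ZMod 2)) = 1 := by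
        rw [wt]
        rw [show (Finset.univ.filter fun j : Fin 1 => (1:ZMod 2) = 1) = Finset.univ by
          ext j; simp]
        simp
      rw [w0, w1]
      omega
    · -- security
      intro F hF D
      obtain ⟨y, hy1, hy0⟩ := exists_sol ΓQual h F hF
      set Y : Matrix (Fin n) (Fin 1) (ZMod 2) := fun i _ => y i with hY
      have hxorY : ∀ Q ∈ ΓQual, xorRows Y Q = fun _ => 1 := by
        intro Q hQ; funext j; exact hy1 Q hQ
      have hYY : Y + Y = 0 := by
        funext i j
        have : ∀ a : ZMod 2, a + a = 0 := by decide
        exact this (Y i j)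
      have hxor_add : ∀ (M N : Matrix (Fin n) (Fin 1) (ZMod 2)) (Q : Finset (Fin n)),
          xorRows (M + N) Q = fun j => xorRows M Q j + xorRows N Q j := by
        intro M N Q
        funext j
        rw [xorRows]
        simp only [Matrix.add_apply]
        rw [Finset.sum_add_distrib]
        rfl
      have hemb : Function.Injective (fun M : Matrix (Fin n) (Fin 1) (ZMod 2) => M + Y) := by
        intro a b hab
        have := congrArg (fun M => M + Y) hab
        simpa [add_assoc, hYY] using this
      have hmap : C1fin = C0fin.map ⟨fun M => M + Y, hemb⟩ := by
        ext M
        rw [Finset.mem_map]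
        constructor
        · intro hM
          refine ⟨M + Y, ?_, ?_⟩
          · rw [hmem0]
            intro Q hQ
            rw [hxor_add, (hmem1 M).mp hM Q hQ, hxorY Q hQ]
            funext j
            simp
            decide
          · show M + Y + Y = M
            rw [add_assoc, hYY, add_zero]
        · rintro ⟨N, hN, rfl⟩
          rw [hmem1]
          intro Q hQ
          show xorRows (N + Y) Q = fun _ => 1
          rw [hxor_add, (hmem0 N).mp hN Q hQ, hxorY Q hQ]
          funext j
          simp
      have hres : ∀ M : Matrix (Fin n) (Fin 1) (ZMod 2),
          rowRestrict F (M + Y) = rowRestrict F M := by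
        intro M
        funext i j
        show M i.1 j + y i.1 = M i.1 j
        rw [hy0 i.1 i.2, add_zero]
      have hval : C1fin.val = C0fin.val.map (fun M => M + Y) := by
        rw [hmap, Finset.map_val]
        rfl
      have hcards : Multiset.card C1fin.val = Multiset.card C0fin.val := by
        rw [hval, Multiset.card_map]
      have hmaps : C1fin.val.map (rowRestrict F) = C0fin.val.map (rowRestrict F) := by
        rw [hval, Multiset.map_map]
        refine Multiset.map_congr rfl fun M _ => ?_
        exact hres M
      rw [hmaps, hcards]
end
end

section
/- For every n ≥ 2: (a) every PXVCS for the (2,n) access structure with pixel expansion 1 has average contrast at most ⌊n/2⌋ · ⌊(n+1)/2⌋ / (n(n−1)/2); and (b) there exists a PXVCS for the (2,n) access structure with pixel expansion 1 whose average contrast equals ⌊n/2⌋ · ⌊(n+1)/2⌋ / (n(n−1)/2). -/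
open scoped Classical

noncomputable section

lemma wt_fin1 (v : Fin 1 → ZMod 2) : wt v = if v 0 = 1 then 1 else 0 := by
  have : (Finset.univ : Finset (Fin 1)) = {0} := rfl
  simp only [wt, this, Finset.filter_singleton]
  split <;> simp

lemma qualK_eq (n : ℕ) : qualK n 2 = Finset.powersetCard 2 (Finset.univ : Finset (Fin n)) := by
  ext Q
  simp [qualK, Finset.mem_powersetCard]

lemma card_qualK (n : ℕ) : (qualK n 2).card = n.choose 2 := by
  rw [qualK_eq, Finset.card_powersetCard, Finset.card_univ, Fintype.card_fin]

lemma nat_quad (n w : ℕ) (hw : w ≤ n) : w * (n - w) ≤ n / 2 * (n - n / 2) := by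
  have h1 : 2 * (n / 2) ≤ n ∧ n ≤ 2 * (n / 2) + 1 := by omega
  zify [hw, Nat.div_le_self n 2]
  rcases le_or_gt w (n / 2) with h | h
  · nlinarith [mul_nonneg (sub_nonneg.2 ((Int.ofNat_le).2 h))
      (sub_nonneg.2 (show (w : ℤ) ≤ (n : ℤ) - (n / 2 : ℕ) by push_cast; omega))]
  · nlinarith [mul_nonneg (sub_nonneg.2 (show ((n / 2 : ℕ) : ℤ) ≤ (w : ℤ) by push_cast; omega))
      (sub_nonneg.2 (show (n : ℤ) - (n / 2 : ℕ) ≤ (w : ℤ) by push_cast; omega))]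

lemma pairSum {n : ℕ} (M : Matrix (Fin n) (Fin 1) (ZMod 2)) :
    ∑ Q ∈ qualK n 2, wt (xorRows M Q)
      = (Finset.univ.filter fun i => M i 0 = 1).card *
        (Finset.univ.filter fun i => M i 0 = 0).card := by
  have h1 : ∀ Q, wt (xorRows M Q) = if (∑ i ∈ Q, M i 0) = 1 then 1 else 0 := by
    intro Q; rw [wt_fin1]; rfl
  simp only [h1]
  rw [Finset.sum_boole]
  rw [← Finset.card_product]
  norm_cast
  refine (Finset.card_bij (fun p _ => ({p.1, p.2} : Finset (Fin n))) ?_ ?_ ?_).symm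
  · rintro ⟨a, b⟩ hab
    simp only [Finset.mem_product, Finset.mem_filter] at hab
    obtain ⟨⟨-, ha⟩, -, hb⟩ := hab
    have hne : a ≠ b := by intro h; rw [h, hb] at ha; exact (by decide : ((0:ZMod 2) ≠ 1)) ha
    simp only [Finset.mem_filter, qualK, Finset.mem_univ, true_and]
    refine ⟨Finset.card_pair hne, ?_⟩
    rw [Finset.sum_pair hne, ha, hb, add_zero]
  · rintro ⟨a, b⟩ hab ⟨c, d⟩ hcd h
    simp only [Finset.mem_product, Finset.mem_filter] at hab hcd
    obtain ⟨⟨-, ha⟩, -, hb⟩ := hab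
    obtain ⟨⟨-, hc⟩, -, hd⟩ := hcd
    have h' : ({a, b} : Finset (Fin n)) = {c, d} := h
    have h1 : a ∈ ({c, d} : Finset (Fin n)) := by rw [← h']; simp
    have h2 : b ∈ ({c, d} : Finset (Fin n)) := by rw [← h']; simp
    simp only [Finset.mem_insert, Finset.mem_singleton] at h1 h2
    have hac : a = c := by
      rcases h1 with h1 | h1
      · exact h1
      · rw [h1, hd] at ha; exact absurd ha (by decide)
    have hbd : b = d := by
      rcases h2 with h2 | h2
      · rw [h2, hc] at hb; exact absurd hb (by decide)
      · exact h2
    simp [hac, hbd]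
  · intro Q hQ
    simp only [Finset.mem_filter, qualK, Finset.mem_univ, true_and] at hQ
    obtain ⟨hQ2, hsum⟩ := hQ
    obtain ⟨a, b, hne, rfl⟩ := Finset.card_eq_two.1 hQ2
    rw [Finset.sum_pair hne] at hsum
    have key : (M a 0 = 1 ∧ M b 0 = 0) ∨ (M a 0 = 0 ∧ M b 0 = 1) := by
      revert hsum; generalize M a 0 = x; generalize M b 0 = y; revert x y; decide
    rcases key with ⟨ha, hb⟩ | ⟨ha, hb⟩
    · exact ⟨(a, b), by simp [Finset.mem_product, ha, hb], rfl⟩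
    · exact ⟨(b, a), by simp [Finset.mem_product, ha, hb], by
        simp [Finset.pair_comm]⟩

lemma msum_swap {α β : Type*} (s : Finset β) (C : Multiset α) (f : β → α → ℚ) :
    ∑ Q ∈ s, (C.map (f Q)).sum = (C.map fun M => ∑ Q ∈ s, f Q M).sum := by
  induction C using Multiset.induction with
  | empty => simp
  | cons a t ih => simp [Finset.sum_add_distrib, ih]

lemma msum_le {α : Type*} (C : Multiset α) (f g : α → ℚ) (h : ∀ x ∈ C, f x ≤ g x) :
    (C.map f).sum ≤ (C.map g).sum := by
  induction C using Multiset.induction with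
  | empty => simp
  | cons a t ih =>
    simp only [Multiset.map_cons, Multiset.sum_cons]
    exact add_le_add (h a (Multiset.mem_cons_self a t)) (ih fun x hx => h x (Multiset.mem_cons_of_mem hx))

lemma msum_nonneg {α : Type*} (C : Multiset α) (f : α → ℚ) (h : ∀ x ∈ C, 0 ≤ f x) :
    0 ≤ (C.map f).sum := by
  have := msum_le C (fun _ => 0) f h
  simpa using this

def wnum {n : ℕ} (M : Matrix (Fin n) (Fin 1) (ZMod 2)) : ℕ :=
  (Finset.univ.filter fun i => M i 0 = 1).card

lemma zmod2_cases (x : ZMod 2) : x = 0 ∨ x = 1 := by revert x; decide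

lemma wnum_le {n : ℕ} (M : Matrix (Fin n) (Fin 1) (ZMod 2)) : wnum M ≤ n := by
  simpa [wnum] using Finset.card_filter_le (Finset.univ : Finset (Fin n)) _

lemma card_zero {n : ℕ} (M : Matrix (Fin n) (Fin 1) (ZMod 2)) :
    (Finset.univ.filter fun i => M i 0 = 0).card = n - wnum M := by
  have h := Finset.card_filter_add_card_filter_not
    (s := (Finset.univ : Finset (Fin n))) (fun i => M i 0 = 1)
  have h2 : (Finset.univ.filter fun i => ¬ M i 0 = 1) = Finset.univ.filter fun i => M i 0 = 0 := by
    apply Finset.filter_congr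
    intro i _
    rcases zmod2_cases (M i 0) with h | h <;> simp [h]
  rw [h2] at h
  simp only [Finset.card_univ, Fintype.card_fin] at h
  have hw : wnum M = (Finset.univ.filter fun i => M i 0 = 1).card := rfl
  omega

def C1set (n : ℕ) : Finset (Matrix (Fin n) (Fin 1) (ZMod 2)) :=
  Finset.univ.filter fun M => wnum M = n / 2 ∨ wnum M = n - n / 2

def cmpl {n : ℕ} (M : Matrix (Fin n) (Fin 1) (ZMod 2)) : Matrix (Fin n) (Fin 1) (ZMod 2) :=
  fun i j => M i j + 1

lemma cmpl_cmpl {n : ℕ} (M : Matrix (Fin n) (Fin 1) (ZMod 2)) : cmpl (cmpl M) = M := by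
  funext i j
  show M i j + 1 + 1 = M i j
  rcases zmod2_cases (M i j) with h | h <;> rw [h] <;> decide

lemma wnum_cmpl {n : ℕ} (M : Matrix (Fin n) (Fin 1) (ZMod 2)) : wnum (cmpl M) = n - wnum M := by
  rw [← card_zero]
  unfold wnum cmpl
  congr 1
  apply Finset.filter_congr
  intro i _
  rcases zmod2_cases (M i 0) with h | h <;> simp [h]

lemma cmpl_mem {n : ℕ} {M : Matrix (Fin n) (Fin 1) (ZMod 2)} (hM : M ∈ C1set n) :
    cmpl M ∈ C1set n := by
  simp only [C1set, Finset.mem_filter, Finset.mem_univ, true_and] at hM ⊢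
  have h1 := wnum_le M
  rw [wnum_cmpl]
  rcases hM with h | h <;> omega

lemma half (n : ℕ) (i : Fin n) (d : ZMod 2) :
    2 * ((C1set n).filter fun M => M i 0 = d).card = (C1set n).card := by
  have hbij : ((C1set n).filter fun M => M i 0 = d).card
      = ((C1set n).filter fun M => M i 0 = d + 1).card := by
    apply Finset.card_bij (fun M _ => cmpl M)
    · intro M hM
      simp only [Finset.mem_filter] at hM ⊢
      exact ⟨cmpl_mem hM.1, by show M i 0 + 1 = d + 1; rw [hM.2]⟩
    · intro M₁ h₁ M₂ h₂ h
      have := congrArg cmpl h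
      rwa [cmpl_cmpl, cmpl_cmpl] at this
    · intro M hM
      simp only [Finset.mem_filter] at hM
      refine ⟨cmpl M, ?_, cmpl_cmpl M⟩
      simp only [Finset.mem_filter]
      refine ⟨cmpl_mem hM.1, ?_⟩
      show M i 0 + 1 = d
      have := hM.2
      rcases zmod2_cases d with h | h <;> rcases zmod2_cases (M i 0) with h' | h' <;>
        simp [h, h'] at this ⊢ <;> decide
  have hdne : d ≠ d + 1 := by rcases zmod2_cases d with h | h <;> rw [h] <;> decide
  have hcover : ∀ x : ZMod 2, x = d ∨ x = d + 1 := by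
    intro x
    rcases zmod2_cases d with h | h <;> rcases zmod2_cases x with h' | h' <;> rw [h, h'] <;> decide
  have hsplit : ((C1set n).filter fun M => M i 0 = d).card
      + ((C1set n).filter fun M => M i 0 = d + 1).card = (C1set n).card := by
    rw [← Finset.card_union_of_disjoint]
    · congr 1
      ext M
      simp only [Finset.mem_union, Finset.mem_filter]
      rcases hcover (M i 0) with h | h <;> simp [h] <;> tauto
    · rw [Finset.disjoint_left]
      intro M h1 h2
      simp only [Finset.mem_filter] at h1 h2
      exact hdne (h1.2.symm.trans h2.2)
  rw [← hsplit, ← hbij, two_mul]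

lemma minQual_qualK (n : ℕ) : minQual (qualK n 2) = qualK n 2 := by
  apply Finset.filter_true_of_mem
  intro Q hQ Q' hQ' hsub
  simp only [qualK, Finset.mem_filter] at hQ hQ'
  exact Finset.eq_of_subset_of_card_le hsub (by omega)

lemma forb_card {n : ℕ} (F : Finset (Fin n)) (hF : Forb (qualK n 2) F) : F.card ≤ 1 := by
  by_contra h
  push_neg at h
  obtain ⟨Q, hQsub, hQcard⟩ := Finset.exists_subset_card_eq (show 2 ≤ F.card by omega)
  exact hF Q (by rw [minQual_qualK]; simp [qualK, hQcard]) hQsub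

lemma rr_singleton {n : ℕ} (i : Fin n) (M : Matrix (Fin n) (Fin 1) (ZMod 2))
    (D : {x // x ∈ ({i} : Finset (Fin n))} → Fin 1 → ZMod 2) :
    rowRestrict {i} M = D ↔ M i 0 = D ⟨i, Finset.mem_singleton_self i⟩ 0 := by
  constructor
  · intro h; rw [← h]; rfl
  · intro h
    funext x j
    have hx : x = ⟨i, Finset.mem_singleton_self i⟩ := Subtype.ext (Finset.mem_singleton.1 x.2)
    have hj : j = 0 := Subsingleton.elim _ _
    rw [hx, hj]
    exact h

lemma wnum_indicator {n : ℕ} (t : Finset (Fin n)) :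
    wnum (fun i (_ : Fin 1) => if i ∈ t then (1 : ZMod 2) else 0) = t.card := by
  unfold wnum
  congr 1
  ext i
  by_cases h : i ∈ t <;> simp [h]

lemma msum_congr {α : Type*} (C : Multiset α) (f g : α → ℚ) (h : ∀ x ∈ C, f x = g x) :
    (C.map f).sum = (C.map g).sum :=
  le_antisymm (msum_le C f g fun x hx => (h x hx).le) (msum_le C g f fun x hx => (h x hx).ge)

lemma exists_sep {n : ℕ} (hn : 2 ≤ n) (a b : Fin n) (hab : a ≠ b) :
    ∃ M ∈ C1set n, M a 0 = 1 ∧ M b 0 = 0 := by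
  have hcard : n / 2 - 1 ≤ ((Finset.univ : Finset (Fin n)) \ {a, b}).card := by
    rw [Finset.card_sdiff_of_subset (Finset.subset_univ _), Finset.card_pair hab]
    simp only [Finset.card_univ, Fintype.card_fin]
    omega
  obtain ⟨t', ht'sub, ht'card⟩ := Finset.exists_subset_card_eq hcard
  have ha : a ∉ t' := fun h => by simpa using ht'sub h
  have hb : b ∉ t' := fun h => by simpa using ht'sub h
  refine ⟨fun i _ => if i ∈ insert a t' then 1 else 0, ?_, ?_, ?_⟩
  · simp only [C1set, Finset.mem_filter, Finset.mem_univ, true_and]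
    refine Finset.mem_filter.2 ⟨Finset.mem_univ _, Or.inl ?_⟩
    rw [wnum_indicator, Finset.card_insert_of_notMem ha, ht'card]
    omega
  · simp
  · have hbna : b ∉ insert a t' := by
      simp only [Finset.mem_insert]
      rintro (h | h)
      · exact hab h.symm
      · exact hb h
    simp [hbna]

/-- the optimal average contrast of `(2,n)`-PXVCS with pixel
expansion 1 is `⌊n/2⌋⌊(n+1)/2⌋ / (n(n−1)/2)`: it is an upper bound and is
attained. -/
theorem stmt14 {n : ℕ} (hn : 2 ≤ n) :
    (∀ C0 C1 : Multiset (Matrix (Fin n) (Fin 1) (ZMod 2)),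
      PXVCS (qualK n 2) C0 C1 →
        avgContrast (qualK n 2) C0 C1
          ≤ ((n / 2 * ((n + 1) / 2) : ℕ) : ℚ) / ((n * (n - 1) / 2 : ℕ) : ℚ)) ∧
    (∃ C0 C1 : Multiset (Matrix (Fin n) (Fin 1) (ZMod 2)),
      PXVCS (qualK n 2) C0 C1 ∧
        avgContrast (qualK n 2) C0 C1
          = ((n / 2 * ((n + 1) / 2) : ℕ) : ℚ) / ((n * (n - 1) / 2 : ℕ) : ℚ)) := by
  have hcast : ((n + 1) / 2 : ℕ) = n - n / 2 := by omega
  have hK : ((n * (n - 1) / 2 : ℕ)) = (qualK n 2).card := by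
    rw [card_qualK, Nat.choose_two_right]
  have hKpos : (0:ℚ) < ((qualK n 2).card : ℚ) := by
    have : 0 < (qualK n 2).card := by rw [card_qualK]; exact Nat.choose_pos hn
    exact_mod_cast this
  have hps : ∀ M : Matrix (Fin n) (Fin 1) (ZMod 2),
      ∑ Q ∈ qualK n 2, wt (xorRows M Q) = wnum M * (n - wnum M) := by
    intro M
    rw [pairSum, card_zero]
    rfl
  constructor
  · rintro C0 C1 ⟨h0, h1, hcon, hsec⟩
    have hc0 : (0:ℚ) < (Multiset.card C0 : ℚ) := by exact_mod_cast Multiset.card_pos.2 h0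
    have hc1 : (0:ℚ) < (Multiset.card C1 : ℚ) := by exact_mod_cast Multiset.card_pos.2 h1
    rw [avgContrast, hcast, hK]
    rw [div_le_div_iff₀ hKpos hKpos]
    apply mul_le_mul_of_nonneg_right _ hKpos.le
    simp only [Nat.cast_one, div_one]
    calc ∑ Q ∈ qualK n 2,
          ((C1.map fun M => (wt (xorRows M Q) : ℚ)).sum / (Multiset.card C1 : ℚ)
            - (C0.map fun M => (wt (xorRows M Q) : ℚ)).sum / (Multiset.card C0 : ℚ))
        ≤ ∑ Q ∈ qualK n 2,
          (C1.map fun M => (wt (xorRows M Q) : ℚ)).sum / (Multiset.card C1 : ℚ) := by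
          apply Finset.sum_le_sum
          intro Q _
          apply sub_le_self
          apply div_nonneg _ hc0.le
          apply msum_nonneg
          intro x _
          positivity
      _ = (∑ Q ∈ qualK n 2, (C1.map fun M => (wt (xorRows M Q) : ℚ)).sum)
            / (Multiset.card C1 : ℚ) := (Finset.sum_div _ _ _).symm
      _ = (C1.map fun M => ∑ Q ∈ qualK n 2, (wt (xorRows M Q) : ℚ)).sum
            / (Multiset.card C1 : ℚ) := by rw [msum_swap]
      _ ≤ (C1.map fun _ => ((n / 2 * (n - n / 2) : ℕ) : ℚ)).sum / (Multiset.card C1 : ℚ) := by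
          apply div_le_div_of_nonneg_right ?_ ?_
          · apply msum_le
            intro M _
            rw [← Nat.cast_sum, hps M]
            exact_mod_cast nat_quad n (wnum M) (wnum_le M)
          · exact hc1.le
      _ = ((n / 2 * (n - n / 2) : ℕ) : ℚ) := by
          rw [Multiset.map_const', Multiset.sum_replicate, nsmul_eq_mul,
            mul_comm, mul_div_assoc, div_self hc1.ne', mul_one]
  · set M0 : Matrix (Fin n) (Fin 1) (ZMod 2) := fun _ _ => 0 with hM0def
    set MJ : Matrix (Fin n) (Fin 1) (ZMod 2) := fun _ _ => 1 with hMJdef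
    set C0 : Multiset (Matrix (Fin n) (Fin 1) (ZMod 2)) := M0 ::ₘ {MJ} with hC0def
    -- wt of xorRows for constant matrices on 2-sets is 0
    have hwt0 : ∀ Q ∈ qualK n 2, ∀ M ∈ C0, wt (xorRows M Q) = 0 := by
      intro Q hQ M hM
      have hQ2 : Q.card = 2 := by simpa [qualK] using hQ
      have hconst : ∃ c : ZMod 2, M = fun _ _ => c := by
        rw [hC0def] at hM
        rcases Multiset.mem_cons.1 hM with h | h
        · exact ⟨0, h⟩
        · exact ⟨1, by simpa using h⟩
      obtain ⟨c, hc⟩ := hconst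
      have hx : xorRows M Q = fun _ => 0 := by
        funext j
        show ∑ i ∈ Q, M i j = 0
        simp only [hc]
        rw [Finset.sum_const, hQ2]
        rcases zmod2_cases c with h | h <;> rw [h] <;> decide
      rw [hx, wt_fin1]
      simp
    have hS0 : ∀ Q ∈ qualK n 2, (C0.map fun M => (wt (xorRows M Q) : ℚ)).sum = 0 := by
      intro Q hQ
      rw [hC0def]
      simp [hwt0 Q hQ M0 (by rw [hC0def]; exact Multiset.mem_cons_self _ _),
        hwt0 Q hQ MJ (by rw [hC0def]; exact Multiset.mem_cons_of_mem (Multiset.mem_singleton_self _))]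
    have hC1ne : C1set n ≠ ∅ := by
      obtain ⟨M, hM, -, -⟩ := exists_sep hn ⟨0, by omega⟩ ⟨1, by omega⟩
        (Fin.ne_of_val_ne (by simp))
      exact Finset.ne_empty_of_mem hM
    have hc1pos : 0 < (C1set n).card := Finset.card_pos.2 (Finset.nonempty_iff_ne_empty.2 hC1ne)
    have hc1Q : (0:ℚ) < ((C1set n).card : ℚ) := by exact_mod_cast hc1pos
    have hcardval : Multiset.card (C1set n).val = (C1set n).card := rfl
    refine ⟨C0, (C1set n).val, ⟨?_, ?_, ?_, ?_⟩, ?_⟩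
    · rw [hC0def]; exact Multiset.cons_ne_zero
    · rw [Ne, Finset.val_eq_zero]
      exact hC1ne
    · -- contrast
      intro Q hQ
      have hQ2 : Q.card = 2 := by simpa [qualK] using hQ
      obtain ⟨a, b, hab, rfl⟩ := Finset.card_eq_two.1 hQ2
      obtain ⟨M, hM, hMa, hMb⟩ := exists_sep hn a b hab
      rw [hS0 _ hQ, zero_div]
      apply div_pos _ (by rw [hcardval]; exact hc1Q)
      have hwt1 : wt (xorRows M {a, b}) = 1 := by
        have hx : xorRows M {a, b} = fun _ => 1 := by
          funext j
          have hj : j = 0 := Subsingleton.elim _ _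
          subst hj
          show ∑ i ∈ ({a, b} : Finset (Fin n)), M i 0 = 1
          rw [Finset.sum_pair hab, hMa, hMb, add_zero]
        rw [hx, wt_fin1]
        simp
      have hmem : (1 : ℚ) ∈ (C1set n).val.map fun M => (wt (xorRows M {a, b}) : ℚ) := by
        apply Multiset.mem_map.2
        exact ⟨M, hM, by rw [hwt1]; norm_num⟩
      have := Multiset.single_le_sum (s := (C1set n).val.map fun M => (wt (xorRows M {a, b}) : ℚ))
        (by intro x hx; obtain ⟨y, -, rfl⟩ := Multiset.mem_map.1 hx; positivity) 1 hmem
      linarith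
    · -- security
      intro F hF D
      have hFc := forb_card F hF
      rcases Finset.eq_empty_or_nonempty F with rfl | hne
      · have hall : ∀ M : Matrix (Fin n) (Fin 1) (ZMod 2),
            D = rowRestrict (∅ : Finset (Fin n)) M := by
          intro M
          funext x
          exact (Finset.notMem_empty _ x.2).elim
        rw [Multiset.count_map, Multiset.count_map,
          Multiset.filter_eq_self.2 (fun a _ => hall a),
          Multiset.filter_eq_self.2 (fun a _ => hall a), mul_comm]
      · have hone : F.card = 1 := by
          have := Finset.card_pos.2 hne
          omega
        obtain ⟨i, rfl⟩ := Finset.card_eq_one.1 hone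
        set d := D ⟨i, Finset.mem_singleton_self i⟩ 0 with hddef
        have hiff : ∀ M : Matrix (Fin n) (Fin 1) (ZMod 2),
            (D = rowRestrict {i} M) ↔ (M i 0 = d) := by
          intro M
          rw [eq_comm, rr_singleton]
        have hcount1 : ((C1set n).val.map (rowRestrict {i})).count D
            = ((C1set n).filter fun M => M i 0 = d).card := by
          rw [Multiset.count_map]
          congr 1
          rw [Multiset.filter_congr (fun x _ => hiff x)]
          rfl
        have hcount0 : (C0.map (rowRestrict {i})).count D = 1 := by
          rw [Multiset.count_map, hC0def]
          rw [Multiset.filter_congr (fun x _ => hiff x)]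
          have h0 : M0 i 0 = 0 := rfl
          have h1 : MJ i 0 = 1 := rfl
          rcases zmod2_cases d with h | h <;>
            simp [Multiset.filter_cons, Multiset.filter_singleton, h0, h1, h] <;> decide
        rw [hcount0, hcount1, mul_one, hcardval]
        have hcard0 : Multiset.card C0 = 2 := by rw [hC0def]; rfl
        rw [hcard0, ← half n i d]
    · -- avgContrast equality
      rw [avgContrast, hcast, hK]
      simp only [Nat.cast_one, div_one]
      have hterm : ∀ Q ∈ qualK n 2,
          ((C1set n).val.map fun M => (wt (xorRows M Q) : ℚ)).sum / (Multiset.card (C1set n).val : ℚ)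
            - (C0.map fun M => (wt (xorRows M Q) : ℚ)).sum / (Multiset.card C0 : ℚ)
          = ((C1set n).val.map fun M => (wt (xorRows M Q) : ℚ)).sum / ((C1set n).card : ℚ) := by
        intro Q hQ
        rw [hS0 Q hQ, zero_div, sub_zero, hcardval]
      rw [Finset.sum_congr rfl hterm, ← Finset.sum_div, msum_swap]
      have hval : ∀ M ∈ (C1set n).val,
          (∑ Q ∈ qualK n 2, (wt (xorRows M Q) : ℚ)) = ((n / 2 * (n - n / 2) : ℕ) : ℚ) := by
        intro M hM
        rw [← Nat.cast_sum, hps M]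
        congr 1
        have hM' : wnum M = n / 2 ∨ wnum M = n - n / 2 := by
          simpa [C1set] using hM
        rcases hM' with h | h
        · rw [h]
        · rw [h]
          have h2 : n - (n - n / 2) = n / 2 := by omega
          rw [h2, Nat.mul_comm]
      rw [msum_congr _ _ _ hval, Multiset.map_const', Multiset.sum_replicate, nsmul_eq_mul,
        hcardval, mul_comm, mul_div_assoc, div_self hc1Q.ne', mul_one]
end
end
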